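/- arXiv:1609.09637 — 3 statements merged into one kernel-verified Lean document; each statement's English description precedes it below -/
import Mathlib

section
/- Let μ₁, μ₂ > 0 and μ = μ₁ + μ₂. Set κ = μ/2 + √(μ₁μ₂). Then for all x ∈ [0,1], 2κ(x − x²) ≤ (μ₁ − μ₂)x + μ₂, and κ is the largest real constant with this property, i.e. if κ' > κ then there exists x ∈ [0,1] with 2κ'(x − x²) > (μ₁ − μ₂)x + μ₂. -/
theorem stmt_6 (μ₁ μ₂ : ℝ) (h₁ : 0 < μ₁) (h₂ : 0 < μ₂) (μ κ : ℝ)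
    (hμ : μ = μ₁ + μ₂) (hκ : κ = μ / 2 + Real.sqrt (μ₁ * μ₂)) :
    (∀ x ∈ Set.Icc (0 : ℝ) 1, 2 * κ * (x - x ^ 2) ≤ (μ₁ - μ₂) * x + μ₂) ∧
    (∀ κ' : ℝ, κ < κ' → ∃ x ∈ Set.Icc (0 : ℝ) 1, (μ₁ - μ₂) * x + μ₂ < 2 * κ' * (x - x ^ 2)) := by
  set a := Real.sqrt μ₁ with haDef
  set b := Real.sqrt μ₂ with hbDef
  have ha : 0 < a := Real.sqrt_pos.mpr h₁
  have hb : 0 < b := Real.sqrt_pos.mpr h₂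
  have ha2 : a ^ 2 = μ₁ := Real.sq_sqrt h₁.le
  have hb2 : b ^ 2 = μ₂ := Real.sq_sqrt h₂.le
  have hab : Real.sqrt (μ₁ * μ₂) = a * b := Real.sqrt_mul h₁.le μ₂
  have hκ2 : 2 * κ = (a + b) ^ 2 := by
    rw [hκ, hμ, hab]; nlinarith
  have habpos : 0 < a + b := by linarith
  constructor
  · intro x hx
    have h2κ : 2 * κ * (x - x ^ 2) = (a + b) ^ 2 * (x - x ^ 2) := by
      rw [mul_assoc, ← hκ2, mul_assoc]
    rw [h2κ, ← ha2, ← hb2]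
    nlinarith [sq_nonneg ((a + b) * x - b)]
  · intro κ' hκ'
    refine ⟨b / (a + b), ⟨div_nonneg hb.le habpos.le, ?_⟩, ?_⟩
    · rw [div_le_one habpos]; linarith
    · have hx : b / (a + b) - (b / (a + b)) ^ 2 = a * b / (a + b) ^ 2 := by
        field_simp; ring
      have heq : (μ₁ - μ₂) * (b / (a + b)) + μ₂ = 2 * κ * (b / (a + b) - (b / (a + b)) ^ 2) := by
        rw [hx, hκ2, ← ha2, ← hb2]
        field_simp; ring
      rw [heq]
      have hpos : 0 < b / (a + b) - (b / (a + b)) ^ 2 := by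
        rw [hx]; positivity
      have : 2 * κ < 2 * κ' := by linarith
      exact mul_lt_mul_of_pos_right this hpos
end

section
/- Let E ⊆ ℝᵈ, let H : E × ℝᵈ → ℝ be twice continuously differentiable and let S : E → [0,∞) be twice continuously differentiable on the interior of E. Define H*(x,p) := H(x, DS(x) − p). Fix T > 0 and suppose (x(t), p(t)) for t ∈ (0,T) is a C¹ curve in the interior of E × ℝᵈ solving the Hamilton equations ẋ = H_p(x,p), ṗ = −H_x(x,p). Then the time-reversed curve (x*(t), p*(t)) := (x(T−t), DS(x(T−t)) − p(T−t)) solves the Hamilton equations for H*: ẋ* = H*_p(x*, p*), ṗ* = −H*_x(x*, p*). -/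
/-!
With the momentum reflection `Φ (x, p) = (x, ∇S x - p)` we have `H* = H ∘ Φ`. Differentiating
`q ↦ H x (c - q)` flips the sign of `H_p`, which is exactly the sign flip of the velocity under
time reversal. In the position variable the chain rule adds `D(∇S) x` applied against `H_p`;
since the Hessian of `S` is symmetric, this is the derivative of `∇S` along the reversed position
curve, so `d/ds (∇S (x (T - s)) - p (T - s)) = -H*_x`.
-/

/-- The `i`-th partial derivative (component of the gradient) of `f : (Fin d → ℝ) → ℝ`. -/
noncomputable def pgrad {d : ℕ} (f : (Fin d → ℝ) → ℝ) (x : Fin d → ℝ) : Fin d → ℝ :=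
  fun i => fderiv ℝ f x (Pi.single i 1)

/-- Gradient of `H` in the momentum variable. -/
noncomputable def Hp {d : ℕ} (H : (Fin d → ℝ) → (Fin d → ℝ) → ℝ)
    (x p : Fin d → ℝ) : Fin d → ℝ := pgrad (H x) p

/-- Gradient of `H` in the position variable. -/
noncomputable def Hx {d : ℕ} (H : (Fin d → ℝ) → (Fin d → ℝ) → ℝ)
    (x p : Fin d → ℝ) : Fin d → ℝ := pgrad (fun y => H y p) x

section Calculus

variable {𝕜 E F G : Type*} [NontriviallyNormedField 𝕜] [NormedAddCommGroup E] [NormedSpace 𝕜 E]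
  [NormedAddCommGroup F] [NormedSpace 𝕜 F] [NormedAddCommGroup G] [NormedSpace 𝕜 G]

theorem ContDiffAt.differentiableAt_fderiv {f : E → F} {x : E} (hf : ContDiffAt 𝕜 2 f x) :
    DifferentiableAt 𝕜 (fderiv 𝕜 f) x :=
  (hf.fderiv_right (m := 1) le_rfl).differentiableAt one_ne_zero

theorem fderiv_comp_prodMk_apply {f : E → F → G} {g : E → F} {x : E}
    (hf : DifferentiableAt 𝕜 (fun z : E × F => f z.1 z.2) (x, g x))
    (hg : DifferentiableAt 𝕜 g x) (u : E) :
    fderiv 𝕜 (fun y => f y (g y)) x u =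
      fderiv 𝕜 (fun y => f y (g x)) x u + fderiv 𝕜 (f x) (g x) (fderiv 𝕜 g x u) := by
  set L := fderiv 𝕜 (fun z : E × F => f z.1 z.2) (x, g x)
  have hL : HasFDerivAt (fun z : E × F => f z.1 z.2) L (x, g x) := hf.hasFDerivAt
  have h_diag : HasFDerivAt (fun y => f y (g y))
      (L.comp ((ContinuousLinearMap.id 𝕜 E).prod (fderiv 𝕜 g x))) x :=
    HasFDerivAt.comp (g := fun z : E × F => f z.1 z.2) (f := fun y => (y, g y)) x hL
      ((hasFDerivAt_id x).prodMk hg.hasFDerivAt)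
  have h_fst : HasFDerivAt (fun y => f y (g x)) (L.comp (ContinuousLinearMap.inl 𝕜 E F)) x :=
    HasFDerivAt.comp (g := fun z : E × F => f z.1 z.2) (f := fun y => (y, g x)) x hL
      (hasFDerivAt_prodMk_left x (g x))
  have h_snd : HasFDerivAt (f x) (L.comp (ContinuousLinearMap.inr 𝕜 E F)) (g x) :=
    HasFDerivAt.comp (g := fun z : E × F => f z.1 z.2) (f := fun r => (x, r)) (g x) hL
      (hasFDerivAt_prodMk_right x (g x))
  simp [h_diag.fderiv, h_fst.fderiv, h_snd.fderiv, ← map_add]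

end Calculus

section Gradient

variable {d : ℕ}

theorem ContinuousLinearMap.apply_eq_dotProduct (L : (Fin d → ℝ) →L[ℝ] ℝ) (u : Fin d → ℝ) :
    L u = u ⬝ᵥ fun j => L (Pi.single j 1) := by
  conv_lhs => rw [pi_eq_sum_univ' u]
  simp [dotProduct]

theorem fderiv_apply_eq_dotProduct_pgrad (f : (Fin d → ℝ) → ℝ) (x u : Fin d → ℝ) :
    fderiv ℝ f x u = u ⬝ᵥ pgrad f x :=
  (fderiv ℝ f x).apply_eq_dotProduct u

theorem pgrad_comp_const_sub (f : (Fin d → ℝ) → ℝ) (c q : Fin d → ℝ) :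
    pgrad (fun r => f (c - r)) q = -pgrad f (c - q) := by
  have h : (fun r => f (c - r)) = (fun r => f (c + r)) ∘ ContinuousLinearEquiv.neg ℝ := by
    funext r; simp [sub_eq_add_neg]
  ext i
  change fderiv ℝ (fun r => f (c - r)) q (Pi.single i 1) = -fderiv ℝ f (c - q) (Pi.single i 1)
  rw [h, ContinuousLinearEquiv.comp_right_fderiv, fderiv_comp_add_left]
  simp [sub_eq_add_neg]

theorem hasFDerivAt_pgrad {f : (Fin d → ℝ) → ℝ} {x : Fin d → ℝ}
    (hf : DifferentiableAt ℝ (fderiv ℝ f) x) :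
    HasFDerivAt (pgrad f) (ContinuousLinearMap.pi fun i =>
      (ContinuousLinearMap.apply ℝ ℝ (Pi.single i 1)).comp (fderiv ℝ (fderiv ℝ f) x)) x :=
  hasFDerivAt_pi.2 fun i =>
    (ContinuousLinearMap.apply ℝ ℝ (Pi.single i 1 : Fin d → ℝ)).hasFDerivAt.comp x hf.hasFDerivAt

theorem ContDiffAt.differentiableAt_pgrad {S : (Fin d → ℝ) → ℝ} {x : Fin d → ℝ}
    (hS : ContDiffAt ℝ 2 S x) : DifferentiableAt ℝ (pgrad S) x :=
  (hasFDerivAt_pgrad hS.differentiableAt_fderiv).differentiableAt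

theorem fderiv_pgrad_apply {f : (Fin d → ℝ) → ℝ} {x : Fin d → ℝ}
    (hf : DifferentiableAt ℝ (fderiv ℝ f) x) (v : Fin d → ℝ) :
    fderiv ℝ (pgrad f) x v = fun i => fderiv ℝ (fderiv ℝ f) x v (Pi.single i 1) := by
  rw [(hasFDerivAt_pgrad hf).fderiv]
  rfl

theorem fderiv_pgrad_dotProduct_comm {S : (Fin d → ℝ) → ℝ} {x : Fin d → ℝ}
    (hS : ContDiffAt ℝ 2 S x) (u v : Fin d → ℝ) :
    fderiv ℝ (pgrad S) x u ⬝ᵥ v = u ⬝ᵥ fderiv ℝ (pgrad S) x v := by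
  rw [dotProduct_comm, fderiv_pgrad_apply hS.differentiableAt_fderiv,
    fderiv_pgrad_apply hS.differentiableAt_fderiv, ← ContinuousLinearMap.apply_eq_dotProduct,
    ← ContinuousLinearMap.apply_eq_dotProduct, hS.isSymmSndFDerivAt (by simp) u v]

theorem Hp_reflect (H : (Fin d → ℝ) → (Fin d → ℝ) → ℝ) (c : (Fin d → ℝ) → Fin d → ℝ)
    (x p : Fin d → ℝ) :
    Hp (fun y q => H y (c y - q)) x (c x - p) = -Hp H x p := by
  rw [Hp, pgrad_comp_const_sub, sub_sub_cancel, Hp]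

theorem Hx_reflect_apply {H : (Fin d → ℝ) → (Fin d → ℝ) → ℝ} {c : (Fin d → ℝ) → Fin d → ℝ}
    {x p : Fin d → ℝ}
    (hH : DifferentiableAt ℝ (fun z : (Fin d → ℝ) × (Fin d → ℝ) => H z.1 z.2) (x, p))
    (hc : DifferentiableAt ℝ c x) (i : Fin d) :
    Hx (fun y q => H y (c y - q)) x (c x - p) i =
      Hx H x p i + fderiv ℝ c x (Pi.single i 1) ⬝ᵥ Hp H x p := by
  have hp : c x - (c x - p) = p := sub_sub_cancel _ _
  have h := fderiv_comp_prodMk_apply (f := H) (g := fun y => c y - (c x - p)) (by rwa [hp])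
    (hc.sub_const _) (Pi.single i 1)
  rw [hp, fderiv_sub_const, fderiv_apply_eq_dotProduct_pgrad (H x)] at h
  exact h

theorem Hx_reflect_pgrad {H : (Fin d → ℝ) → (Fin d → ℝ) → ℝ} {S : (Fin d → ℝ) → ℝ}
    {x p : Fin d → ℝ}
    (hH : DifferentiableAt ℝ (fun z : (Fin d → ℝ) × (Fin d → ℝ) => H z.1 z.2) (x, p))
    (hS : ContDiffAt ℝ 2 S x) :
    Hx (fun y q => H y (pgrad S y - q)) x (pgrad S x - p) =
      Hx H x p + fderiv ℝ (pgrad S) x (Hp H x p) := by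
  ext i
  rw [Pi.add_apply, Hx_reflect_apply hH hS.differentiableAt_pgrad, fderiv_pgrad_dotProduct_comm hS,
    single_one_dotProduct]

end Gradient

theorem stmt_8_general (d : ℕ) (H : (Fin d → ℝ) → (Fin d → ℝ) → ℝ) (S : (Fin d → ℝ) → ℝ)
    (hH : ContDiff ℝ 2 (fun z : (Fin d → ℝ) × (Fin d → ℝ) => H z.1 z.2))
    (hS : ContDiff ℝ 2 S)
    (Hstar : (Fin d → ℝ) → (Fin d → ℝ) → ℝ)
    (hHstar : ∀ x p, Hstar x p = H x (pgrad S x - p))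
    (T : ℝ)
    (x p : ℝ → Fin d → ℝ)
    (hx : ∀ t ∈ Set.Ioo (0 : ℝ) T, HasDerivAt x (Hp H (x t) (p t)) t)
    (hp : ∀ t ∈ Set.Ioo (0 : ℝ) T, HasDerivAt p (-(Hx H (x t) (p t))) t) :
    ∀ t ∈ Set.Ioo (0 : ℝ) T,
      HasDerivAt (fun s => x (T - s))
        (Hp Hstar (x (T - t)) (pgrad S (x (T - t)) - p (T - t))) t ∧
      HasDerivAt (fun s => pgrad S (x (T - s)) - p (T - s))
        (-(Hx Hstar (x (T - t)) (pgrad S (x (T - t)) - p (T - t)))) t := by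
  obtain rfl : Hstar = fun y q => H y (pgrad S y - q) := funext fun y => funext (hHstar y)
  intro t ⟨ht₀, htT⟩
  have hτ : T - t ∈ Set.Ioo (0 : ℝ) T := ⟨by linarith, by linarith⟩
  set X := x (T - t)
  set P := p (T - t)
  have hrev : HasDerivAt (fun s => T - s) (-1) t := by simpa using (hasDerivAt_id t).const_sub T
  have hx_rev : HasDerivAt (fun s => x (T - s)) (-Hp H X P) t := by
    simpa [Function.comp_def] using (hx _ hτ).scomp t hrev
  have hp_rev : HasDerivAt (fun s => p (T - s)) (Hx H X P) t := by
    simpa [Function.comp_def] using (hp _ hτ).scomp t hrev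
  refine ⟨by rwa [Hp_reflect], ?_⟩
  have hval : -Hx (fun y q => H y (pgrad S y - q)) X (pgrad S X - P) =
      fderiv ℝ (pgrad S) X (-Hp H X P) - Hx H X P := by
    rw [Hx_reflect_pgrad (hH.differentiable two_ne_zero _) hS.contDiffAt, map_neg]
    abel
  rw [hval]
  exact (hS.contDiffAt.differentiableAt_pgrad.hasFDerivAt.comp_hasDerivAt t hx_rev).sub hp_rev

theorem stmt_8 (d : ℕ) (H : (Fin d → ℝ) → (Fin d → ℝ) → ℝ) (S : (Fin d → ℝ) → ℝ)
    (hH : ContDiff ℝ 2 (fun z : (Fin d → ℝ) × (Fin d → ℝ) => H z.1 z.2))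
    (hS : ContDiff ℝ 2 S) (hSnn : ∀ x, 0 ≤ S x)
    (Hstar : (Fin d → ℝ) → (Fin d → ℝ) → ℝ)
    (hHstar : ∀ x p, Hstar x p = H x (pgrad S x - p))
    (T : ℝ) (hT : 0 < T)
    (x p : ℝ → Fin d → ℝ)
    (hx : ∀ t ∈ Set.Ioo (0 : ℝ) T, HasDerivAt x (Hp H (x t) (p t)) t)
    (hp : ∀ t ∈ Set.Ioo (0 : ℝ) T, HasDerivAt p (-(Hx H (x t) (p t))) t) :
    ∀ t ∈ Set.Ioo (0 : ℝ) T,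
      HasDerivAt (fun s => x (T - s))
        (Hp Hstar (x (T - t)) (pgrad S (x (T - t)) - p (T - t))) t ∧
      HasDerivAt (fun s => pgrad S (x (T - s)) - p (T - s))
        (-(Hx Hstar (x (T - t)) (pgrad S (x (T - t)) - p (T - t)))) t :=
  stmt_8_general d H S hH hS Hstar hHstar T x p hx hp
end

section
/- Let μ₁, μ₂ > 0, μ = μ₁ + μ₂, a(x) = x(1−x), b(x) = (xμ₁ − (1−x)μ₂)/2, H(x,p) = ½a(x)p² − b(x)p, and S(x) = μ₁log(μ₁/(μ(1−x))) + μ₂log(μ₂/(μx)) for x ∈ (0,1). Then DS(x) = 2b(x)/a(x), and consequently H(x, DS(x)) = 0 and H(x, DS(x) − p) = H(x,p) for all x ∈ (0,1) and p ∈ ℝ (i.e. H is reversible with respect to S). -/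
/-!
Away from the boundary the quasipotential is `μ₁ log μ₁ + μ₂ log μ₂ - μ log μ - μ₁ log (1 - x) - μ₂ log x`,
whose derivative `μ₁/(1 - x) - μ₂/x` equals `2b/a`. For a quadratic Hamiltonian `½ a p² - b p`
the identity `a s = 2 b` is exactly what makes `p ↦ s - p` a symmetry, and `H(s) = H(0) = 0` follows.
-/

open Real Filter Topology

theorem quadratic_hamiltonian_reflect {K : Type*} [Field K] (h2 : (2 : K) ≠ 0) {a b s : K}
    (hs : a * s = 2 * b) (p : K) :
    1 / 2 * a * (s - p) ^ 2 - b * (s - p) = 1 / 2 * a * p ^ 2 - b * p := by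
  linear_combination (s / 2 - p) * hs - (a * s * p - b * s) * inv_mul_cancel₀ h2

theorem hasDerivAt_log_div_mul {c μ t : ℝ} (hc : c ≠ 0) (hμ : μ ≠ 0) (ht : t ≠ 0) :
    HasDerivAt (fun s => log (c / (μ * s))) (-t⁻¹) t := by
  have hf : HasDerivAt (fun s => c / μ * s⁻¹) (c / μ * -(t ^ 2)⁻¹) t :=
    (hasDerivAt_inv ht).const_mul (c / μ)
  convert hf.log (by positivity) using 1
  · ext s
    rw [div_mul_eq_div_div, div_eq_mul_inv]
  · field_simp

theorem hasDerivAt_quasipotential {μ₁ μ₂ μ x : ℝ} (h₁ : μ₁ ≠ 0) (h₂ : μ₂ ≠ 0) (hμ : μ ≠ 0)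
    (hx₀ : x ≠ 0) (hx₁ : x ≠ 1) :
    HasDerivAt (fun y => μ₁ * log (μ₁ / (μ * (1 - y))) + μ₂ * log (μ₂ / (μ * y)))
      (μ₁ / (1 - x) - μ₂ / x) x := by
  have hx₁' : 1 - x ≠ 0 := sub_ne_zero.mpr hx₁.symm
  have hleft := (hasDerivAt_log_div_mul h₁ hμ hx₁').comp x ((hasDerivAt_id x).const_sub 1)
  have hright := hasDerivAt_log_div_mul h₂ hμ hx₀
  refine ((hleft.const_mul μ₁).add (hright.const_mul μ₂)).congr_deriv ?_
  ring

theorem stmt_17 (μ₁ μ₂ : ℝ) (h₁ : 0 < μ₁) (h₂ : 0 < μ₂) (μ : ℝ) (hμ : μ = μ₁ + μ₂)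
    (a b : ℝ → ℝ) (ha : ∀ x, a x = x * (1 - x))
    (hb : ∀ x, b x = (x * μ₁ - (1 - x) * μ₂) / 2)
    (H : ℝ → ℝ → ℝ) (hH : ∀ x p, H x p = (1 / 2) * a x * p ^ 2 - b x * p)
    (S : ℝ → ℝ)
    (hS : ∀ x ∈ Set.Ioo (0 : ℝ) 1,
      S x = μ₁ * Real.log (μ₁ / (μ * (1 - x))) + μ₂ * Real.log (μ₂ / (μ * x))) :
    ∀ x ∈ Set.Ioo (0 : ℝ) 1,
      deriv S x = 2 * b x / a x ∧
      H x (deriv S x) = 0 ∧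
      ∀ p : ℝ, H x (deriv S x - p) = H x p := by
  rintro x ⟨hx₀, hx₁⟩
  have hx₁' : 1 - x ≠ 0 := by linarith
  have hS_near : S =ᶠ[𝓝 x] fun y => μ₁ * log (μ₁ / (μ * (1 - y))) + μ₂ * log (μ₂ / (μ * y)) := by
    filter_upwards [Ioo_mem_nhds hx₀ hx₁] with y hy using hS y hy
  have hderiv := (hasDerivAt_quasipotential h₁.ne' h₂.ne' (by linarith) hx₀.ne' hx₁.ne)
    |>.congr_of_eventuallyEq hS_near
  have hDS : deriv S x = 2 * b x / a x := by
    rw [hderiv.deriv, ha, hb]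
    field_simp
  have hreflect (p : ℝ) : H x (deriv S x - p) = H x p := by
    simp only [hH]
    refine quadratic_hamiltonian_reflect two_ne_zero ?_ p
    rw [hDS, ha]
    field_simp
  refine ⟨hDS, ?_, hreflect⟩
  simpa [hH] using hreflect 0
end
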